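/- arXiv:math/0312208 — 4 statements merged into one kernel-verified Lean document; each statement's English description precedes it below -/
import Mathlib

section
/- Let S, T ∈ M_N(ℤ) be the matrices defined by: S_{jj} = -1, S_{jk} = -a_{i_j,i_k} for j < k, S_{jk} = 0 for j > k; and T_{jj} = -1, T_{jk} = ⟨s_{i_{j+1}}⋯s_{i_{k-1}}(α_{i_k}), α_{i_j}^∨⟩ for j < k, T_{jk} = 0 for j > k. Then T is the inverse of S, i.e. S·T = I_N = T·S. -/
/-- `sWordProd s i a b` is the composite `s (i a) ∘ s (i (a+1)) ∘ ⋯ ∘ s (i b)`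
(the identity if `b < a`), i.e. the action of `s_{i_a} s_{i_{a+1}} ⋯ s_{i_b}`. -/
def sWordProd {n : ℕ} {Wt : Type} [AddCommGroup Wt] (s : Fin n → AddMonoid.End Wt)
    (i : ℕ → Fin n) (a b : ℕ) : AddMonoid.End Wt :=
  ((List.range' a (b + 1 - a)).map fun t => s (i t)).prod

/-- `sWordProdRev s i a b` is the composite `s (i b) ∘ s (i (b-1)) ∘ ⋯ ∘ s (i a)`
(the identity if `b < a`), i.e. the action of `s_{i_b} s_{i_{b-1}} ⋯ s_{i_a}`. -/
def sWordProdRev {n : ℕ} {Wt : Type} [AddCommGroup Wt] (s : Fin n → AddMonoid.End Wt)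
    (i : ℕ → Fin n) (a b : ℕ) : AddMonoid.End Wt :=
  ((List.range' a (b + 1 - a)).reverse.map fun t => s (i t)).prod

/-- `nextOcc N i j` is `j(1) := min {l : j < l ≤ N ∧ i l = i j}`, and `N + 1` if no
such `l` exists. -/
def nextOcc {n : ℕ} (N : ℕ) (i : ℕ → Fin n) (j : ℕ) : ℕ :=
  if h : ((Finset.Ioc j N).filter fun l => i l = i j).Nonempty
  then (((Finset.Ioc j N).filter fun l => i l = i j)).min' h
  else N + 1

lemma sWordProd_nil {n : ℕ} {Wt : Type} [AddCommGroup Wt] (s : Fin n → AddMonoid.End Wt)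
    (i : ℕ → Fin n) {a b : ℕ} (h : b < a) : sWordProd s i a b = 1 := by
  unfold sWordProd
  rw [Nat.sub_eq_zero_of_le (by omega)]
  rfl

lemma sWordProd_cons {n : ℕ} {Wt : Type} [AddCommGroup Wt] (s : Fin n → AddMonoid.End Wt)
    (i : ℕ → Fin n) {a b : ℕ} (h : a ≤ b) :
    sWordProd s i a b = s (i a) * sWordProd s i (a + 1) b := by
  unfold sWordProd
  rw [show b + 1 - a = (b - a) + 1 by omega, List.range'_succ]
  simp only [List.map_cons, List.prod_cons, show b + 1 - (a + 1) = b - a by omega]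

/-- Key telescoping identity. -/
lemma sWordProd_key {n : ℕ} {Wt : Type} [AddCommGroup Wt] (α : Fin n → Wt)
    (pair : Fin n → Wt →+ ℤ) (s : Fin n → AddMonoid.End Wt)
    (hs : ∀ p (x : Wt), s p x = x - pair p x • α p) (i : ℕ → Fin n) (k : ℕ) :
    ∀ d m, m + d = k + 1 →
      sWordProd s i m k (α (i (k + 1))) =
        α (i (k + 1)) - ∑ t ∈ Finset.Ico m (k + 1),
          pair (i t) (sWordProd s i (t + 1) k (α (i (k + 1)))) • α (i t) := by
  intro d
  induction d with
  | zero =>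
      intro m hm
      have hm' : m = k + 1 := by omega
      subst hm'
      rw [sWordProd_nil s i (by omega), Finset.Ico_self, Finset.sum_empty, sub_zero]
      rfl
  | succ d ih =>
      intro m hm
      have hmk : m ≤ k := by omega
      rw [sWordProd_cons s i hmk, AddMonoid.End.coe_mul, Function.comp_apply, hs,
        Finset.sum_eq_sum_Ico_succ_bot (by omega : m < k + 1)]
      nth_rewrite 1 [ih (m + 1) (by omega)]
      abel

theorem stmt0
    -- the Cartan matrix of a semisimple Lie algebra
    (n N : ℕ) (hn : 0 < n) (hN : 0 < N)
    (A : Matrix (Fin n) (Fin n) ℤ)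
    (hA2 : ∀ p, A p p = 2)
    (hAneg : ∀ p q, p ≠ q → A p q ≤ 0)
    (hA0 : ∀ p q, A p q = 0 → A q p = 0)
    -- the weight lattice, simple roots, fundamental weights, coroot pairing
    (Wt : Type) [AddCommGroup Wt]
    (α ϖ : Fin n → Wt)
    (pair : Fin n → Wt →+ ℤ)
    (hpair : ∀ p q, pair p (α q) = A p q)
    (hϖ : ∀ l p, pair p (ϖ l) = if l = p then 1 else 0)
    -- the simple reflections acting on the weight lattice
    (s : Fin n → AddMonoid.End Wt)
    (hs : ∀ p (x : Wt), s p x = x - pair p x • α p)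
    -- the Weyl group as a Coxeter system, acting on the weight lattice
    (G : Type) [Group G]
    (M : CoxeterMatrix (Fin n)) (cs : CoxeterSystem M G)
    (π : G →* AddMonoid.End Wt)
    (hπ : ∀ p, π (cs.simple p) = s p)
    -- a reduced expression i = (i 1, …, i N) for the longest element w₀, N = ℓ(w₀)
    (i : ℕ → Fin n)
    (hred : cs.IsReduced (List.ofFn fun t : Fin N => i (t.1 + 1)))
    (hlong : ∀ w : G, cs.length w ≤ N)
    (S T : Matrix (Fin N) (Fin N) ℤ)
    (hS : ∀ j k : Fin N, S j k =
      if j = k then -1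
      else if j < k then -A (i (j.1 + 1)) (i (k.1 + 1))
      else 0)
    (hT : ∀ j k : Fin N, T j k =
      if j = k then -1
      else if j < k then
        pair (i (j.1 + 1)) (sWordProd s i (j.1 + 2) k.1 (α (i (k.1 + 1))))
      else 0)
    : S * T = 1 ∧ T * S = 1 := by
  have hST : S * T = 1 := by
    ext j k
    rw [Matrix.mul_apply, Matrix.one_apply]
    rcases lt_trichotomy j k with hjk | hjk | hjk
    · -- main case j < k
      have hjk' : j.1 < k.1 := hjk
      rw [if_neg hjk.ne]
      -- the recursion for T j k
      have hTrec : ∀ l : Fin N, l < k →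
          T l k = A (i (l.1 + 1)) (i (k.1 + 1)) -
            ∑ t ∈ Finset.Ico (l.1 + 2) (k.1 + 1),
              pair (i t) (sWordProd s i (t + 1) k.1 (α (i (k.1 + 1)))) *
                A (i (l.1 + 1)) (i t) := by
        intro l hl
        rw [hT, if_neg hl.ne, if_pos hl]
        have hl' : l.1 < k.1 := hl
        rw [sWordProd_key α pair s hs i k.1 (k.1 + 1 - (l.1 + 2)) (l.1 + 2) (by omega)]
        rw [map_sub, map_sum, hpair]
        congr 1
        refine Finset.sum_congr rfl fun t _ => ?_
        rw [map_zsmul, hpair, smul_eq_mul]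
      -- each term of the matrix product
      have hterm : ∀ l : Fin N, S j l * T l k =
          (if l = j then -T j k else 0) +
          (if l = k then A (i (j.1 + 1)) (i (k.1 + 1)) else 0) +
          (if l ∈ Finset.Ioo j k then -(A (i (j.1 + 1)) (i (l.1 + 1)) * T l k) else 0) := by
        intro l
        by_cases h1 : l = j
        · subst h1
          rw [hS, if_pos rfl, if_pos rfl, if_neg (Fin.ne_of_lt hjk),
            if_neg (fun hc => (lt_irrefl l) (Finset.mem_Ioo.mp hc).1)]
          ring1
        by_cases h2 : l = k
        · subst h2
          rw [hS, if_neg (Fin.ne_of_lt hjk), if_pos hjk, hT, if_pos rfl,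
            if_neg h1, if_pos rfl,
            if_neg (fun hc => (lt_irrefl l) (Finset.mem_Ioo.mp hc).2)]
          ring1
        rcases lt_trichotomy l j with h3 | h3 | h3
        · rw [hS, if_neg (fun h => h1 h.symm), if_neg (lt_asymm h3),
            if_neg h1, if_neg h2,
            if_neg (fun hc => (lt_asymm h3) (Finset.mem_Ioo.mp hc).1)]
          ring1
        · exact absurd h3 h1
        · rcases lt_trichotomy l k with h4 | h4 | h4
          · rw [hS, if_neg (fun h => h1 h.symm), if_pos h3, if_neg h1, if_neg h2,
              if_pos (Finset.mem_Ioo.mpr ⟨h3, h4⟩)]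
            ring1
          · exact absurd h4 h2
          · rw [hT, if_neg h2, if_neg (lt_asymm h4), hS,
              if_neg (fun h => h1 h.symm), if_pos h3, if_neg h1, if_neg h2,
              if_neg (fun hc => (lt_asymm h4) (Finset.mem_Ioo.mp hc).2)]
            ring1
      calc ∑ l, S j l * T l k
          = ∑ l, ((if l = j then -T j k else 0) +
              ((if l = k then A (i (j.1 + 1)) (i (k.1 + 1)) else 0) +
              (if l ∈ Finset.Ioo j k then
                -(A (i (j.1 + 1)) (i (l.1 + 1)) * T l k) else 0))) := by
            refine Finset.sum_congr rfl fun l _ => ?_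
            rw [hterm l]; ring
        _ = -T j k + (A (i (j.1 + 1)) (i (k.1 + 1)) +
              ∑ l ∈ Finset.Ioo j k, -(A (i (j.1 + 1)) (i (l.1 + 1)) * T l k)) := by
            rw [Finset.sum_add_distrib, Finset.sum_add_distrib,
              Finset.sum_ite_eq' Finset.univ j (fun _ => -T j k),
              Finset.sum_ite_eq' Finset.univ k
                (fun _ => A (i (j.1 + 1)) (i (k.1 + 1))),
              Finset.sum_ite_mem, Finset.univ_inter,
              if_pos (Finset.mem_univ j), if_pos (Finset.mem_univ k)]
        _ = 0 := by
            have hsum : (∑ l ∈ Finset.Ioo j k, -(A (i (j.1 + 1)) (i (l.1 + 1)) * T l k)) =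
                ∑ t ∈ Finset.Ico (j.1 + 2) (k.1 + 1),
                  -(pair (i t) (sWordProd s i (t + 1) k.1 (α (i (k.1 + 1)))) *
                    A (i (j.1 + 1)) (i t)) := by
              refine Finset.sum_nbij' (fun l : Fin N => l.1 + 1)
                (fun t => ⟨min (t - 1) k.1, lt_of_le_of_lt (min_le_right _ _) k.isLt⟩)
                ?_ ?_ ?_ ?_ ?_
              · intro l hl
                simp only [Finset.mem_Ioo, Fin.lt_def] at hl
                simp only [Finset.mem_Ico]
                omega
              · intro t ht
                simp only [Finset.mem_Ico] at ht
                simp only [Finset.mem_Ioo, Fin.lt_def]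
                constructor
                · show j.1 < min (t - 1) k.1
                  omega
                · show min (t - 1) k.1 < k.1
                  omega
              · intro l hl
                simp only [Finset.mem_Ioo, Fin.lt_def] at hl
                apply Fin.ext
                show min (l.1 + 1 - 1) k.1 = l.1
                omega
              · intro t ht
                simp only [Finset.mem_Ico] at ht
                show min (t - 1) k.1 + 1 = t
                omega
              · intro l hl
                rw [Finset.mem_Ioo] at hl
                rw [hT, if_neg (Fin.ne_of_lt hl.2), if_pos hl.2]
                ring_nf
            rw [hsum, hTrec j hjk, Finset.sum_neg_distrib]
            ring
    · -- diagonal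
      subst hjk
      rw [if_pos rfl]
      rw [Finset.sum_eq_single j]
      · rw [hS, hT, if_pos rfl, if_pos rfl]; ring
      · intro l _ hl
        have hl' : l.1 ≠ j.1 := fun h => hl (Fin.ext h)
        rcases lt_or_gt_of_ne hl' with h1 | h1
        · rw [hS, if_neg (by simp only [Fin.ext_iff]; omega),
            if_neg (by simp only [Fin.lt_def]; omega)]
          ring
        · rw [hT, if_neg (by simp only [Fin.ext_iff]; omega),
            if_neg (by simp only [Fin.lt_def]; omega)]
          ring
      · intro h; exact absurd (Finset.mem_univ j) h
    · -- j > k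
      have hjk' : k.1 < j.1 := hjk
      rw [if_neg hjk.ne']
      apply Finset.sum_eq_zero
      intro l _
      rcases lt_trichotomy l.1 j.1 with h1 | h1 | h1
      · rw [hS, if_neg (by simp only [Fin.ext_iff]; omega),
          if_neg (by simp only [Fin.lt_def]; omega)]
        ring
      · rw [hT, if_neg (by simp only [Fin.ext_iff]; omega),
          if_neg (by simp only [Fin.lt_def]; omega)]
        ring
      · rw [hT, if_neg (by simp only [Fin.ext_iff]; omega),
          if_neg (by simp only [Fin.lt_def]; omega)]
        ring
  exact ⟨hST, mul_eq_one_comm.mp hST⟩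
end

section
/- Let T, V, C ∈ M_N(ℤ) be the matrices defined by: T_{jj} = -1, T_{jk} = ⟨s_{i_{j+1}}⋯s_{i_{k-1}}(α_{i_k}), α_{i_j}^∨⟩ for j < k, T_{jk} = 0 for j > k; V_{jk} = 1 if j ≤ k and i_j = i_k, and V_{jk} = 0 otherwise; C_{jk} = ⟨s_{i_{j+1}}⋯s_{i_k}(ϖ_{i_k}), α_{i_j}^∨⟩ for j ≤ k and C_{jk} = 0 for j > k. Then T·V = -C. -/
lemma key_lemma {n : ℕ} {Wt : Type} [AddCommGroup Wt] (α ϖ : Fin n → Wt)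
    (pair : Fin n → Wt →+ ℤ) (hϖ : ∀ l p, pair p (ϖ l) = if l = p then 1 else 0)
    (s : Fin n → AddMonoid.End Wt) (hs : ∀ p (x : Wt), s p x = x - pair p x • α p)
    (i : ℕ → Fin n) (m : Fin n) :
    ∀ c a, ((List.range' a c).map fun t => s (i t)).prod (ϖ m)
      = ϖ m - ∑ t ∈ Finset.range c,
          (if i (a + t) = m
           then ((List.range' a t).map fun u => s (i u)).prod (α (i (a + t))) else 0) := by
  intro c
  induction c with
  | zero => intro a; simp
  | succ c ih =>
    intro a
    rw [List.range'_1_concat, List.map_append, List.prod_append]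
    have hmul : ∀ (f g : AddMonoid.End Wt) (x : Wt), (f * g) x = f (g x) := fun _ _ _ => rfl
    rw [List.map_singleton, List.prod_singleton, hmul, hs, hϖ]
    by_cases h : m = i (a + c)
    · rw [if_pos h, one_smul, map_sub, ih a, Finset.sum_range_succ, if_pos h.symm]
      abel
    · rw [if_neg h, zero_smul, sub_zero, ih a, Finset.sum_range_succ,
        if_neg (fun hh => h hh.symm), add_zero]


theorem stmt1
    -- the Cartan matrix of a semisimple Lie algebra
    (n N : ℕ) (hn : 0 < n) (hN : 0 < N)
    (A : Matrix (Fin n) (Fin n) ℤ)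
    (hA2 : ∀ p, A p p = 2)
    (hAneg : ∀ p q, p ≠ q → A p q ≤ 0)
    (hA0 : ∀ p q, A p q = 0 → A q p = 0)
    -- the weight lattice, simple roots, fundamental weights, coroot pairing
    (Wt : Type) [AddCommGroup Wt]
    (α ϖ : Fin n → Wt)
    (pair : Fin n → Wt →+ ℤ)
    (hpair : ∀ p q, pair p (α q) = A p q)
    (hϖ : ∀ l p, pair p (ϖ l) = if l = p then 1 else 0)
    -- the simple reflections acting on the weight lattice
    (s : Fin n → AddMonoid.End Wt)
    (hs : ∀ p (x : Wt), s p x = x - pair p x • α p)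
    -- the Weyl group as a Coxeter system, acting on the weight lattice
    (G : Type) [Group G]
    (M : CoxeterMatrix (Fin n)) (cs : CoxeterSystem M G)
    (π : G →* AddMonoid.End Wt)
    (hπ : ∀ p, π (cs.simple p) = s p)
    -- a reduced expression i = (i 1, …, i N) for the longest element w₀, N = ℓ(w₀)
    (i : ℕ → Fin n)
    (hred : cs.IsReduced (List.ofFn fun t : Fin N => i (t.1 + 1)))
    (hlong : ∀ w : G, cs.length w ≤ N)
    (T V C : Matrix (Fin N) (Fin N) ℤ)
    (hT : ∀ j k : Fin N, T j k =
      if j = k then -1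
      else if j < k then
        pair (i (j.1 + 1)) (sWordProd s i (j.1 + 2) k.1 (α (i (k.1 + 1))))
      else 0)
    (hV : ∀ j k : Fin N, V j k =
      if j ≤ k ∧ i (j.1 + 1) = i (k.1 + 1) then 1 else 0)
    (hC : ∀ j k : Fin N, C j k =
      if j ≤ k then
        pair (i (j.1 + 1)) (sWordProd s i (j.1 + 2) (k.1 + 1) (ϖ (i (k.1 + 1))))
      else 0)
    : T * V = -C := by
  ext j k
  rw [Matrix.mul_apply, Matrix.neg_apply]
  by_cases hjk : j ≤ k
  · -- main case
    have hjk' : j.1 ≤ k.1 := hjk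
    -- Step A: the sum equals ∑ F, with F given explicitly
    have stepA : ∑ l : Fin N, T j l * V l k = ∑ l ∈ Finset.range N,
        ((if l = j.1 then (if i (j.1 + 1) = i (k.1 + 1) then -1 else 0) else 0) +
         (if j.1 < l ∧ l ≤ k.1 ∧ i (l + 1) = i (k.1 + 1) then
            pair (i (j.1 + 1))
              (((List.range' (j.1 + 2) (l - j.1 - 1)).map fun u => s (i u)).prod
                (α (i (l + 1))))
          else 0)) := by
      rw [← Fin.sum_univ_eq_sum_range
        (fun l => (if l = j.1 then (if i (j.1 + 1) = i (k.1 + 1) then -1 else 0) else 0) +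
         (if j.1 < l ∧ l ≤ k.1 ∧ i (l + 1) = i (k.1 + 1) then
            pair (i (j.1 + 1))
              (((List.range' (j.1 + 2) (l - j.1 - 1)).map fun u => s (i u)).prod
                (α (i (l + 1))))
          else 0)) N]
      refine Finset.sum_congr rfl fun l _ => ?_
      beta_reduce
      rw [hT, hV]
      rcases lt_trichotomy j l with h | rfl | h
      · have h1 : ¬ j = l := ne_of_lt h
        have h2 : j.1 < l.1 := h
        rw [if_neg h1, if_pos h, if_neg (show ¬ l.1 = j.1 by omega), zero_add]
        by_cases h4 : l ≤ k ∧ i (l.1 + 1) = i (k.1 + 1)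
        · have h5 : l.1 ≤ k.1 := h4.1
          rw [if_pos h4, mul_one, if_pos (show j.1 < l.1 ∧ l.1 ≤ k.1 ∧ i (l.1 + 1) = i (k.1 + 1)
            from ⟨h2, h5, h4.2⟩)]
          simp only [sWordProd]
          rw [show l.1 + 1 - (j.1 + 2) = l.1 - j.1 - 1 from by omega]
        · have h5 : ¬ (j.1 < l.1 ∧ l.1 ≤ k.1 ∧ i (l.1 + 1) = i (k.1 + 1)) := by
            intro hh
            exact h4 ⟨hh.2.1, hh.2.2⟩
          rw [if_neg h4, mul_zero, if_neg h5]
      · rw [if_pos rfl, if_pos rfl,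
          if_neg (show ¬ (j.1 < j.1 ∧ j.1 ≤ k.1 ∧ i (j.1 + 1) = i (k.1 + 1)) from
            fun hh => absurd hh.1 (lt_irrefl _)), add_zero]
        by_cases h5 : i (j.1 + 1) = i (k.1 + 1)
        · rw [if_pos ⟨hjk, h5⟩, if_pos h5, mul_one]
        · rw [if_neg (fun hh => h5 hh.2), if_neg h5, mul_zero]
      · have h2 : l.1 < j.1 := h
        rw [if_neg (show ¬ j = l from fun hh => absurd (hh ▸ h2) (lt_irrefl _)),
          if_neg (show ¬ j < l from not_lt_of_gt h), zero_mul,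
          if_neg (show ¬ l.1 = j.1 by omega),
          if_neg (show ¬ (j.1 < l.1 ∧ l.1 ≤ k.1 ∧ i (l.1 + 1) = i (k.1 + 1)) by
            intro hh; omega), add_zero]
    -- Step B: compute ∑ F
    have hsub : Finset.Ico (j.1 + 1) (k.1 + 1) ⊆ Finset.range N := by
      intro x hx
      rw [Finset.mem_Ico] at hx
      rw [Finset.mem_range]
      have := k.isLt
      omega
    have stepB : (∑ l ∈ Finset.range N,
        ((if l = j.1 then (if i (j.1 + 1) = i (k.1 + 1) then -1 else 0) else 0) +
         (if j.1 < l ∧ l ≤ k.1 ∧ i (l + 1) = i (k.1 + 1) then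
            pair (i (j.1 + 1))
              (((List.range' (j.1 + 2) (l - j.1 - 1)).map fun u => s (i u)).prod
                (α (i (l + 1))))
          else 0))) =
        (if i (j.1 + 1) = i (k.1 + 1) then -1 else 0) +
        ∑ t ∈ Finset.range (k.1 - j.1),
          (if i (j.1 + 2 + t) = i (k.1 + 1)
           then pair (i (j.1 + 1))
             (((List.range' (j.1 + 2) t).map fun u => s (i u)).prod (α (i (j.1 + 2 + t))))
           else 0) := by
      rw [Finset.sum_add_distrib]
      congr 1
      · rw [Finset.sum_ite_eq' (Finset.range N) j.1
          fun _ => if i (j.1 + 1) = i (k.1 + 1) then (-1 : ℤ) else 0]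
        rw [if_pos (Finset.mem_range.mpr j.isLt)]
      · rw [← Finset.sum_subset hsub (fun x _ hx => ?_), Finset.sum_Ico_eq_sum_range]
        · rw [show k.1 + 1 - (j.1 + 1) = k.1 - j.1 by omega]
          refine Finset.sum_congr rfl fun t ht => ?_
          rw [Finset.mem_range] at ht
          rw [show j.1 + 1 + t - j.1 - 1 = t by omega,
            show j.1 + 1 + t + 1 = j.1 + 2 + t by omega]
          by_cases hcase : i (j.1 + 2 + t) = i (k.1 + 1)
          · rw [if_pos ⟨by omega, by omega, hcase⟩, if_pos hcase]
          · rw [if_neg (fun hh => hcase hh.2.2), if_neg hcase]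
        · rw [Finset.mem_Ico] at hx
          rw [if_neg (show ¬ (j.1 < x ∧ x ≤ k.1 ∧ i (x + 1) = i (k.1 + 1)) by
            intro hh; omega)]
    -- Step C: compute C j k
    have stepC : C j k =
        (if i (k.1 + 1) = i (j.1 + 1) then 1 else 0) -
        ∑ t ∈ Finset.range (k.1 - j.1),
          (if i (j.1 + 2 + t) = i (k.1 + 1)
           then pair (i (j.1 + 1))
             (((List.range' (j.1 + 2) t).map fun u => s (i u)).prod (α (i (j.1 + 2 + t))))
           else 0) := by
      rw [hC, if_pos hjk]
      simp only [sWordProd]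
      rw [show k.1 + 1 + 1 - (j.1 + 2) = k.1 - j.1 by omega,
        key_lemma α ϖ pair hϖ s hs i (i (k.1 + 1)) (k.1 - j.1) (j.1 + 2), map_sub, map_sum, hϖ]
      congr 1
      refine Finset.sum_congr rfl fun t _ => ?_
      by_cases hcase : i (j.1 + 2 + t) = i (k.1 + 1)
      · rw [if_pos hcase, if_pos hcase]
      · rw [if_neg hcase, if_neg hcase, map_zero]
    rw [stepA, stepB, stepC]
    by_cases hcase : i (j.1 + 1) = i (k.1 + 1)
    · rw [if_pos hcase, if_pos hcase.symm]; ring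
    · rw [if_neg hcase, if_neg (fun hh => hcase hh.symm)]; ring
  · -- j > k : both sides zero
    rw [hC, if_neg hjk, neg_zero]
    refine Finset.sum_eq_zero fun l _ => ?_
    by_cases hlk : l ≤ k ∧ i (l.1 + 1) = i (k.1 + 1)
    · have h1 : ¬ j = l := by
        rintro rfl; exact hjk hlk.1
      have h2 : ¬ j < l := by
        intro hh
        exact hjk (le_of_lt (lt_of_lt_of_le hh hlk.1))
      rw [hT, if_neg h1, if_neg h2, zero_mul]
    · rw [hV, if_neg hlk, mul_zero]
end

section
/- Let S, V, L̃ ∈ M_N(ℤ) be the matrices defined by: S_{jj} = -1, S_{jk} = -a_{i_j,i_k} for j < k, S_{jk} = 0 for j > k; V_{jk} = 1 if j ≤ k and i_j = i_k, and V_{jk} = 0 otherwise; L̃_{jk} = -1 if k = j or k = j(1), L̃_{jk} = -a_{i_j,i_k} if j < k < j(1), and L̃_{jk} = 0 otherwise. Then V^{-1}·S = L̃. -/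
namespace Stmt5Aux

lemma nextOcc_gt {n : ℕ} (N : ℕ) (i : ℕ → Fin n) (m : ℕ) (hm : m ≤ N) :
    m < nextOcc N i m := by
  unfold nextOcc
  split
  · next h =>
    have hmem := Finset.min'_mem _ h
    simp only [Finset.mem_filter, Finset.mem_Ioc] at hmem
    exact hmem.1.1
  · omega

lemma nextOcc_le {n : ℕ} (N : ℕ) (i : ℕ → Fin n) (m l : ℕ) (h1 : m < l) (h2 : l ≤ N)
    (h3 : i l = i m) : nextOcc N i m ≤ l := by
  have hmem : l ∈ (Finset.Ioc m N).filter fun t => i t = i m := by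
    simp [Finset.mem_filter, Finset.mem_Ioc, h1, h2, h3]
  unfold nextOcc
  rw [dif_pos ⟨l, hmem⟩]
  exact Finset.min'_le _ _ hmem

lemma lt_nextOcc {n : ℕ} (N : ℕ) (i : ℕ → Fin n) (m K : ℕ) (hK : K ≤ N)
    (hno : ∀ l, m < l → l ≤ K → i l ≠ i m) : K < nextOcc N i m := by
  unfold nextOcc
  split
  · next h =>
    have hmem := Finset.min'_mem _ h
    simp only [Finset.mem_filter, Finset.mem_Ioc] at hmem
    by_contra hc
    exact hno _ hmem.1.1 (by omega) hmem.2
  · omega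

lemma nextOcc_eq {n : ℕ} (N : ℕ) (i : ℕ → Fin n) (m K : ℕ) (h1 : m < K) (h2 : K ≤ N)
    (h3 : i K = i m) (h4 : ∀ l, m < l → l < K → i l ≠ i m) : nextOcc N i m = K := by
  have hle := nextOcc_le N i m K h1 h2 h3
  have hgt := lt_nextOcc N i m (K - 1) (by omega) (fun l hl1 hl2 => h4 l hl1 (by omega))
  omega

lemma key {n N : ℕ} (A : Matrix (Fin n) (Fin n) ℤ) (hA2 : ∀ p, A p p = 2)
    (i : ℕ → Fin n)
    (S V Lt : Matrix (Fin N) (Fin N) ℤ)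
    (hS : ∀ j k : Fin N, S j k =
      if j = k then -1
      else if j < k then -A (i (j.1 + 1)) (i (k.1 + 1))
      else 0)
    (hV : ∀ j k : Fin N, V j k =
      if j ≤ k ∧ i (j.1 + 1) = i (k.1 + 1) then 1 else 0)
    (hLt : ∀ j k : Fin N, Lt j k =
      if k = j ∨ k.1 + 1 = nextOcc N i (j.1 + 1) then -1
      else if j < k ∧ k.1 + 1 < nextOcc N i (j.1 + 1) then
        -A (i (j.1 + 1)) (i (k.1 + 1))
      else 0)
    : V * Lt = S := by
  ext j k
  rw [Matrix.mul_apply, hS]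
  -- a term vanishes if `k < l`
  have hzero_gt : ∀ l : Fin N, (k : ℕ) < (l : ℕ) → V j l * Lt l k = 0 := by
    intro l hkl
    have hgt : l.1 + 1 < nextOcc N i (l.1 + 1) := nextOcc_gt N i _ (by omega)
    rw [hLt]
    rw [if_neg, if_neg]
    · exact mul_zero _
    · rintro ⟨h1, h2⟩
      rw [Fin.lt_def] at h1; omega
    · rintro (h | h)
      · rw [Fin.ext_iff] at h; omega
      · omega
  -- a term vanishes if the `V` factor vanishes
  have hzero_V : ∀ l : Fin N, ¬(j ≤ l ∧ i (j.1 + 1) = i (l.1 + 1)) → V j l * Lt l k = 0 := by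
    intro l h
    rw [hV, if_neg h, zero_mul]
  by_cases hjk : (j : ℕ) < (k : ℕ)
  · -- case j < k
    have hjk' : j < k := Fin.lt_def.mpr hjk
    rw [if_neg (ne_of_lt hjk'), if_pos hjk']
    set T := Finset.univ.filter
      (fun l : Fin N => (j : ℕ) ≤ (l : ℕ) ∧ (l : ℕ) < (k : ℕ) ∧ i (l.1 + 1) = i (j.1 + 1))
      with hT
    have hjT : j ∈ T := by
      rw [hT, Finset.mem_filter]
      exact ⟨Finset.mem_univ _, le_refl _, hjk, rfl⟩
    have hTne : T.Nonempty := ⟨j, hjT⟩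
    set p := T.max' hTne with hp
    have hpT := T.max'_mem hTne
    rw [← hp, hT, Finset.mem_filter] at hpT
    obtain ⟨-, hjp, hpk, hip⟩ := hpT
    have hmaxT : ∀ l : Fin N, l ∈ T → l ≤ p := fun l hl => T.le_max' l hl
    -- no occurrence of the colour of j strictly between p+1 and k+1
    have hno : ∀ m, p.1 + 1 < m → m < k.1 + 1 → i m ≠ i (j.1 + 1) := by
      intro m h1 h2 hc
      have hm : m - 1 < N := by omega
      have hmm : m - 1 + 1 = m := by omega
      have hmemT : (⟨m - 1, hm⟩ : Fin N) ∈ T := by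
        rw [hT, Finset.mem_filter]
        refine ⟨Finset.mem_univ _, ?_, ?_, ?_⟩
        · simp only [Fin.val_mk]; omega
        · simp only [Fin.val_mk]; omega
        · simp only [Fin.val_mk, hmm]; exact hc
      have h5 := hmaxT _ hmemT
      rw [Fin.le_def] at h5
      simp only [Fin.val_mk] at h5
      omega
    by_cases heq : i (k.1 + 1) = i (j.1 + 1)
    · -- i_k = i_j : two contributing terms, l = p and l = k
      have hNO : nextOcc N i (p.1 + 1) = k.1 + 1 := by
        refine nextOcc_eq N i _ _ (by omega) (by omega) (by rw [heq, hip]) ?_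
        intro l h1 h2 hc
        exact hno l h1 h2 (by rw [← hip]; exact hc)
      have hpk' : p ≠ k := Fin.ne_of_lt (Fin.lt_def.mpr hpk)
      rw [Finset.sum_eq_add_of_mem p k (Finset.mem_univ _) (Finset.mem_univ _) hpk' ?_]
      · have e1 : V j p = 1 := by
          rw [hV, if_pos ⟨Fin.le_def.mpr (by omega), hip.symm⟩]
        have e2 : V j k = 1 := by
          rw [hV, if_pos ⟨le_of_lt hjk', heq.symm⟩]
        have e3 : Lt p k = -1 := by rw [hLt, if_pos (Or.inr hNO.symm)]
        have e4 : Lt k k = -1 := by rw [hLt, if_pos (Or.inl rfl)]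
        rw [e1, e2, e3, e4, heq, hA2]
        norm_num
      · intro l _ ⟨hlp, hlk⟩
        by_cases hVc : j ≤ l ∧ i (j.1 + 1) = i (l.1 + 1)
        · rcases lt_trichotomy (l : ℕ) (k : ℕ) with hlt | hEq | hgt
          · -- l < k, l < p : next occurrence after l is at most p+1 < k+1
            have hlT : l ∈ T := by
              rw [hT, Finset.mem_filter]
              exact ⟨Finset.mem_univ _, Fin.le_def.mp hVc.1, hlt, hVc.2.symm⟩
            have hlep := hmaxT _ hlT
            rw [Fin.le_def] at hlep
            have hlp' : (l : ℕ) < (p : ℕ) := by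
              rcases lt_or_eq_of_le hlep with h | h
              · exact h
              · exact absurd (Fin.ext h) hlp
            have hNle : nextOcc N i (l.1 + 1) ≤ p.1 + 1 :=
              nextOcc_le N i _ _ (by omega) (by omega) (hip.trans hVc.2)
            rw [hLt, if_neg, if_neg]
            · exact mul_zero _
            · rintro ⟨h1, h2⟩; omega
            · rintro (h | h)
              · rw [Fin.ext_iff] at h; omega
              · omega
          · exact absurd (Fin.ext hEq) hlk
          · exact hzero_gt l hgt
        · exact hzero_V l hVc
    · -- i_k ≠ i_j : one contributing term, l = p
      have hNOgt : k.1 + 1 < nextOcc N i (p.1 + 1) := by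
        refine lt_nextOcc N i _ _ (by omega) ?_
        intro l h1 h2 hc
        rw [hip] at hc
        rcases lt_or_eq_of_le h2 with h | h
        · exact hno l h1 h hc
        · rw [h] at hc; exact heq hc
      rw [Finset.sum_eq_single_of_mem p (Finset.mem_univ _) ?_]
      · have e1 : V j p = 1 := by
          rw [hV, if_pos ⟨Fin.le_def.mpr (by omega), hip.symm⟩]
        have e3 : Lt p k = -A (i (p.1 + 1)) (i (k.1 + 1)) := by
          rw [hLt, if_neg, if_pos ⟨Fin.lt_def.mpr (by omega), hNOgt⟩]
          rintro (h | h)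
          · rw [Fin.ext_iff] at h; omega
          · omega
        rw [e1, e3, hip]
        ring
      · intro l _ hlp
        by_cases hVc : j ≤ l ∧ i (j.1 + 1) = i (l.1 + 1)
        · rcases lt_trichotomy (l : ℕ) (k : ℕ) with hlt | hEq | hgt
          · have hlT : l ∈ T := by
              rw [hT, Finset.mem_filter]
              exact ⟨Finset.mem_univ _, Fin.le_def.mp hVc.1, hlt, hVc.2.symm⟩
            have hlep := hmaxT _ hlT
            rw [Fin.le_def] at hlep
            have hlp' : (l : ℕ) < (p : ℕ) := by
              rcases lt_or_eq_of_le hlep with h | h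
              · exact h
              · exact absurd (Fin.ext h) hlp
            have hNle : nextOcc N i (l.1 + 1) ≤ p.1 + 1 :=
              nextOcc_le N i _ _ (by omega) (by omega) (hip.trans hVc.2)
            rw [hLt, if_neg, if_neg]
            · exact mul_zero _
            · rintro ⟨h1, h2⟩; omega
            · rintro (h | h)
              · rw [Fin.ext_iff] at h; omega
              · omega
          · exfalso
            have : l = k := Fin.ext hEq
            rw [this] at hVc
            exact heq hVc.2.symm
          · exact hzero_gt l hgt
        · exact hzero_V l hVc
  · -- case k ≤ j
    by_cases hjk2 : j = k
    · -- diagonal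
      subst hjk2
      rw [if_pos rfl]
      rw [Finset.sum_eq_single_of_mem j (Finset.mem_univ _) ?_]
      · have e1 : V j j = 1 := by rw [hV, if_pos ⟨le_refl j, rfl⟩]
        have e2 : Lt j j = -1 := by rw [hLt, if_pos (Or.inl rfl)]
        rw [e1, e2]
        norm_num
      · intro l _ hlj
        by_cases hVc : j ≤ l ∧ i (j.1 + 1) = i (l.1 + 1)
        · have hjl : (j : ℕ) < (l : ℕ) := by
            rcases lt_or_eq_of_le (Fin.le_def.mp hVc.1) with h | h
            · exact h
            · exact absurd (Fin.ext h).symm hlj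
          exact hzero_gt l hjl
        · exact hzero_V l hVc
    · -- k < j : everything is zero
      rw [if_neg hjk2, if_neg (by rw [Fin.lt_def]; omega)]
      apply Finset.sum_eq_zero
      intro l _
      by_cases hVc : j ≤ l ∧ i (j.1 + 1) = i (l.1 + 1)
      · have hkj : (k : ℕ) < (j : ℕ) := by
          rcases lt_or_eq_of_le (Nat.le_of_not_lt hjk) with h | h
          · exact h
          · exact absurd (Fin.ext h).symm hjk2
        have := Fin.le_def.mp hVc.1
        exact hzero_gt l (by omega)
      · exact hzero_V l hVc

end Stmt5Aux

theorem stmt5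
    -- the Cartan matrix of a semisimple Lie algebra
    (n N : ℕ) (hn : 0 < n) (hN : 0 < N)
    (A : Matrix (Fin n) (Fin n) ℤ)
    (hA2 : ∀ p, A p p = 2)
    (hAneg : ∀ p q, p ≠ q → A p q ≤ 0)
    (hA0 : ∀ p q, A p q = 0 → A q p = 0)
    -- the weight lattice, simple roots, fundamental weights, coroot pairing
    (Wt : Type) [AddCommGroup Wt]
    (α ϖ : Fin n → Wt)
    (pair : Fin n → Wt →+ ℤ)
    (hpair : ∀ p q, pair p (α q) = A p q)
    (hϖ : ∀ l p, pair p (ϖ l) = if l = p then 1 else 0)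
    -- the simple reflections acting on the weight lattice
    (s : Fin n → AddMonoid.End Wt)
    (hs : ∀ p (x : Wt), s p x = x - pair p x • α p)
    -- the Weyl group as a Coxeter system, acting on the weight lattice
    (G : Type) [Group G]
    (M : CoxeterMatrix (Fin n)) (cs : CoxeterSystem M G)
    (π : G →* AddMonoid.End Wt)
    (hπ : ∀ p, π (cs.simple p) = s p)
    -- a reduced expression i = (i 1, …, i N) for the longest element w₀, N = ℓ(w₀)
    (i : ℕ → Fin n)
    (hred : cs.IsReduced (List.ofFn fun t : Fin N => i (t.1 + 1)))
    (hlong : ∀ w : G, cs.length w ≤ N)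
    (S V Lt : Matrix (Fin N) (Fin N) ℤ)
    (hS : ∀ j k : Fin N, S j k =
      if j = k then -1
      else if j < k then -A (i (j.1 + 1)) (i (k.1 + 1))
      else 0)
    (hV : ∀ j k : Fin N, V j k =
      if j ≤ k ∧ i (j.1 + 1) = i (k.1 + 1) then 1 else 0)
    (hLt : ∀ j k : Fin N, Lt j k =
      if k = j ∨ k.1 + 1 = nextOcc N i (j.1 + 1) then -1
      else if j < k ∧ k.1 + 1 < nextOcc N i (j.1 + 1) then
        -A (i (j.1 + 1)) (i (k.1 + 1))
      else 0)
    : V⁻¹ * S = Lt := by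
  have hVLt : V * Lt = S := Stmt5Aux.key A hA2 i S V Lt hS hV hLt
  have htri : V.BlockTriangular id := by
    intro a b hab
    rw [hV, if_neg]
    rintro ⟨h, -⟩
    exact absurd h (not_le.mpr hab)
  have hdet : V.det = 1 := by
    rw [Matrix.det_of_upperTriangular htri]
    apply Finset.prod_eq_one
    intro a _
    rw [hV, if_pos ⟨le_refl a, rfl⟩]
  have hunit : IsUnit V.det := by rw [hdet]; exact isUnit_one
  rw [← hVLt, ← Matrix.mul_assoc, Matrix.nonsing_inv_mul V hunit, Matrix.one_mul]
end

section
/- Let λ be a dominant integral weight and define v = (v_1,…,v_N) ∈ ℤ^N by v_k = ⟨s_{i_{k-1}}⋯s_{i_1}(λ), α_{i_k}^∨⟩. Let j ∈ {1,…,N} be such that j(1) ≤ N. Then −v_j − v_{j(1)} − Σ_{j<k<j(1)} a_{i_j,i_k} v_k = 0; equivalently, the j-th row r_j of the matrix L (defined by: if j(1) ≤ N then L_{jj} = L_{j,j(1)} = -1, L_{jk} = -a_{i_j,i_k} for j < k < j(1) and L_{jk} = 0 otherwise) satisfies r_j · v = 0. -/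
lemma rev_step' {n : ℕ} {Wt : Type} [AddCommGroup Wt] (s : Fin n → AddMonoid.End Wt)
    (i : ℕ → Fin n) (m : ℕ) (hm : 1 ≤ m) :
    sWordProdRev s i 1 m = s (i m) * sWordProdRev s i 1 (m - 1) := by
  obtain ⟨m, rfl⟩ := Nat.exists_eq_add_of_le hm
  unfold sWordProdRev
  have h1 : 1 + m + 1 - 1 = m + 1 := by omega
  have h2 : 1 + m - 1 + 1 - 1 = m := by omega
  rw [h1, h2, List.range'_concat]
  simp [Nat.add_comm]

theorem stmt6
    -- the Cartan matrix of a semisimple Lie algebra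
    (n N : ℕ) (hn : 0 < n) (hN : 0 < N)
    (A : Matrix (Fin n) (Fin n) ℤ)
    (hA2 : ∀ p, A p p = 2)
    (hAneg : ∀ p q, p ≠ q → A p q ≤ 0)
    (hA0 : ∀ p q, A p q = 0 → A q p = 0)
    -- the weight lattice, simple roots, fundamental weights, coroot pairing
    (Wt : Type) [AddCommGroup Wt]
    (α ϖ : Fin n → Wt)
    (pair : Fin n → Wt →+ ℤ)
    (hpair : ∀ p q, pair p (α q) = A p q)
    (hϖ : ∀ l p, pair p (ϖ l) = if l = p then 1 else 0)
    -- the simple reflections acting on the weight lattice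
    (s : Fin n → AddMonoid.End Wt)
    (hs : ∀ p (x : Wt), s p x = x - pair p x • α p)
    -- the Weyl group as a Coxeter system, acting on the weight lattice
    (G : Type) [Group G]
    (M : CoxeterMatrix (Fin n)) (cs : CoxeterSystem M G)
    (π : G →* AddMonoid.End Wt)
    (hπ : ∀ p, π (cs.simple p) = s p)
    -- a reduced expression i = (i 1, …, i N) for the longest element w₀, N = ℓ(w₀)
    (i : ℕ → Fin n)
    (hred : cs.IsReduced (List.ofFn fun t : Fin N => i (t.1 + 1)))
    (hlong : ∀ w : G, cs.length w ≤ N)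
    -- a dominant integral weight λ and the string v of the lowest weight vector
    (lam : Wt) (hdom : ∀ p, 0 ≤ pair p lam)
    (v : ℕ → ℤ)
    (hv : ∀ k, v k = pair (i k) (sWordProdRev s i 1 (k - 1) lam))
    (j : ℕ) (hj1 : 1 ≤ j) (hj : nextOcc N i j ≤ N)
    : -v j - v (nextOcc N i j) -
      ∑ k ∈ Finset.Ioo j (nextOcc N i j), A (i j) (i k) * v k = 0 := by
  have hstep : ∀ (p q : Fin n) (x : Wt), pair p (s q x) = pair p x - A p q * pair q x := by
    intro p q x
    rw [hs, map_sub, map_zsmul, hpair, smul_eq_mul]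
    ring
  set S := (Finset.Ioc j N).filter (fun l => i l = i j) with hS
  have hne : S.Nonempty := by
    by_contra h
    have : nextOcc N i j = N + 1 := by rw [nextOcc, dif_neg (by exact h)]
    omega
  have hj'eq : nextOcc N i j = S.min' hne := by rw [nextOcc, dif_pos hne]
  have hmem : nextOcc N i j ∈ S := hj'eq ▸ S.min'_mem hne
  rw [hS, Finset.mem_filter, Finset.mem_Ioc] at hmem
  obtain ⟨⟨hjj', _⟩, hij'⟩ := hmem
  have key : ∀ m, j ≤ m →
      pair (i j) (sWordProdRev s i 1 m lam)
        = -v j - ∑ k ∈ Finset.Ioc j m, A (i j) (i k) * v k := by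
    intro m hm
    induction m with
    | zero => omega
    | succ m ih =>
      rcases Nat.eq_or_lt_of_le hm with heq | hlt
      · subst heq
        rw [rev_step' s i (m+1) (by omega)]
        have hrw : pair (i (m+1)) ((s (i (m+1)) * sWordProdRev s i 1 (m + 1 - 1)) lam)
            = pair (i (m+1)) (s (i (m+1)) (sWordProdRev s i 1 (m + 1 - 1) lam)) := rfl
        rw [hrw, hstep, hA2, hv (m+1)]
        simp
        ring
      · have hjm : j ≤ m := by omega
        rw [rev_step' s i (m+1) (by omega)]
        have hrw : pair (i j) ((s (i (m+1)) * sWordProdRev s i 1 (m + 1 - 1)) lam)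
            = pair (i j) (s (i (m+1)) (sWordProdRev s i 1 m lam)) := rfl
        rw [hrw, hstep, ih hjm, Finset.sum_Ioc_succ_top hjm]
        have : pair (i (m+1)) (sWordProdRev s i 1 m lam) = v (m+1) := by
          rw [hv (m+1)]; norm_num
        rw [this]
        ring
  have hm1 : j ≤ nextOcc N i j - 1 := by omega
  have := key (nextOcc N i j - 1) hm1
  have hvj' : pair (i j) (sWordProdRev s i 1 (nextOcc N i j - 1) lam) = v (nextOcc N i j) := by
    rw [hv (nextOcc N i j), hij']
  rw [hvj'] at this
  have hset : Finset.Ioc j (nextOcc N i j - 1) = Finset.Ioo j (nextOcc N i j) := by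
    ext k; simp [Finset.mem_Ioc, Finset.mem_Ioo]; omega
  rw [hset] at this
  linarith
end
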